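/- (Configurational/Eshelby balance, Corollary 4, stated for a finite-dimensional linear order-parameter space M = ℝᵏ.) Let k ∈ ℕ, let B₀ ⊆ ℝ³ be open, T > 0, and let 𝓛 : ℝ³ × ℝ³ × ℝ³ × L(ℝ³,ℝ³) × ℝᵏ × ℝᵏ × L(ℝ³,ℝᵏ) → ℝ be twice continuously differentiable. Let x̃ : B₀ × (0,T) → ℝ³ and ν̃ : B₀ × (0,T) → ℝᵏ be twice continuously differentiable, write j(X,t) = (X, x̃, ẋ, F, ν̃, ν̇, N) with ẋ = ∂ₜx̃, F = ∇x̃, ν̇ = ∂ₜν̃, N = ∇ν̃, and assume they satisfy the Euler–Lagrange equations ∂ₜ(∂_{ẋ}𝓛∘j) = ∂_x𝓛∘j − Div(∂_F𝓛∘j) and ∂ₜ(∂_{ν̇}𝓛∘j) = ∂_ν𝓛∘j − Div(∂_N𝓛∘j) on B₀ × (0,T). Then the pointwise configurational balance holds: ∂ₜ( Fᵀ(∂_{ẋ}𝓛∘j) + Nᵀ(∂_{ν̇}𝓛∘j) ) = Div( (𝓛∘j)·I − Fᵀ(∂_F𝓛∘j) − Nᵀ(∂_N𝓛∘j) ) −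 (∂_X𝓛)∘j, where I is the identity on ℝ³, ∂_X𝓛 denotes the explicit partial derivative of 𝓛 with respect to its first (referential-place) argument, Fᵀ and Nᵀ denote adjoints, and Div of a field of linear maps on ℝ³ is (Div S)_B = Σ_A ∂_{X_A} S_{BA}. The second-order tensor (𝓛∘j)·I − Fᵀ(∂_F𝓛∘j) − Nᵀ(∂_N𝓛∘j) is (up to the kinetic and external-potential terms) the modified Eshelby tensor ℙ = ρ₀e·I − FᵀP − Nᵀ𝒮 for continua with substructure. -/

import Mathlib

open MeasureTheory

noncomputable section

/-- Referential place: `ℝ³`. -/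
abbrev V3 : Type := Fin 3 → ℝ

/-- The argument space of the Lagrangian density: `(X, x, ẋ, F, ν, ν̇, N)` with the
order-parameter space `M = ℝᵏ`, `F ∈ L(ℝ³,ℝ³)` and `N ∈ L(ℝ³,ℝᵏ)` given in
coordinates. -/
abbrev Arg (k : ℕ) : Type :=
  V3 × V3 × V3 × (Fin 3 → Fin 3 → ℝ) × (Fin k → ℝ) × (Fin k → ℝ) × (Fin k → Fin 3 → ℝ)

/-- Explicit partial derivative `∂_X 𝓛` (first slot). -/
def pdX {k : ℕ} (L : Arg k → ℝ) (a : Arg k) : V3 :=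
  fun A => fderiv ℝ L a (Pi.single A 1, 0, 0, 0, 0, 0, 0)

/-- Partial derivative `∂_x 𝓛` (second slot). -/
def pdx {k : ℕ} (L : Arg k → ℝ) (a : Arg k) : V3 :=
  fun i => fderiv ℝ L a (0, Pi.single i 1, 0, 0, 0, 0, 0)

/-- Partial derivative `∂_ẋ 𝓛` (third slot). -/
def pdv {k : ℕ} (L : Arg k → ℝ) (a : Arg k) : V3 :=
  fun i => fderiv ℝ L a (0, 0, Pi.single i 1, 0, 0, 0, 0)

/-- Partial derivative `∂_F 𝓛` (fourth slot), as a two-point tensor `(∂_F 𝓛)_{iA}`. -/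
def pdF {k : ℕ} (L : Arg k → ℝ) (a : Arg k) : Fin 3 → Fin 3 → ℝ :=
  fun i A => fderiv ℝ L a (0, 0, 0, Pi.single i (Pi.single A 1), 0, 0, 0)

/-- Partial derivative `∂_ν 𝓛` (fifth slot). -/
def pdnu {k : ℕ} (L : Arg k → ℝ) (a : Arg k) : Fin k → ℝ :=
  fun α => fderiv ℝ L a (0, 0, 0, 0, Pi.single α 1, 0, 0)

/-- Partial derivative `∂_ν̇ 𝓛` (sixth slot). -/
def pdnud {k : ℕ} (L : Arg k → ℝ) (a : Arg k) : Fin k → ℝ :=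
  fun α => fderiv ℝ L a (0, 0, 0, 0, 0, Pi.single α 1, 0)

/-- Partial derivative `∂_N 𝓛` (seventh slot), `(∂_N 𝓛)_{αA}`. -/
def pdN {k : ℕ} (L : Arg k → ℝ) (a : Arg k) : Fin k → Fin 3 → ℝ :=
  fun α A => fderiv ℝ L a (0, 0, 0, 0, 0, 0, Pi.single α (Pi.single A 1))

/-- Spatial gradient `F = ∇x̃` of the placement field, `F_{iA} = ∂_{X_A} x̃_i`. -/
def gradPl (x : V3 → ℝ → V3) (X : V3) (t : ℝ) : Fin 3 → Fin 3 → ℝ :=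
  fun i A => fderiv ℝ (fun Y => x Y t) X (Pi.single A 1) i

/-- Spatial gradient `N = ∇ν̃` of the order-parameter field, `N_{αA} = ∂_{X_A} ν̃_α`. -/
def gradOp {k : ℕ} (ν : V3 → ℝ → (Fin k → ℝ)) (X : V3) (t : ℝ) : Fin k → Fin 3 → ℝ :=
  fun α A => fderiv ℝ (fun Y => ν Y t) X (Pi.single A 1) α

/-- The first jet `j(X,t) = (X, x̃, ẋ, F, ν̃, ν̇, N)` along the motion. -/
def jet {k : ℕ} (x : V3 → ℝ → V3) (ν : V3 → ℝ → (Fin k → ℝ)) (X : V3) (t : ℝ) :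
    Arg k :=
  (X, x X t, deriv (x X) t, gradPl x X t, ν X t, deriv (ν X) t, gradOp ν X t)

/-- Row-wise referential divergence of a field of linear maps,
`(Div S)_α = Σ_A ∂_{X_A} S_{αA}`. -/
def divg {m : ℕ} (S : V3 → (Fin m → Fin 3 → ℝ)) (X : V3) : Fin m → ℝ :=
  fun α => ∑ A : Fin 3, fderiv ℝ (fun Y => S Y α A) X (Pi.single A 1)

/-! Write `∂_B` for the referential derivative along `e_B`. By the chain rule, `∂_B(𝓛 ∘ j)` is
`(∂_X 𝓛)_B` plus, for each of the two fields `φ ∈ {x̃, ν̃}` with momentum `p`, stress `S` and force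
`f` (the partials of `𝓛` in the slots `φ̇`, `∇φ`, `φ`), the pairing
`∂_B φ · f + ∂_B φ̇ · p + ∂_B ∇φ : S`. For one field, the product rule, the Euler–Lagrange equation
`∂ₜ p = f - Div S` and the symmetry of second derivatives (`∂_B φ̇ = ∂ₜ ∂_B φ`,
`∂_A ∂_B φ = ∂_B ∂_A φ`) turn `∂ₜ (∇φᵀ p)_B + Div (∇φᵀ S)_B` into exactly this pairing; summing
over both fields gives the balance. -/

open Function Topology

theorem fderiv_apply_eq_sum_partials {k : ℕ} (L : Arg k → ℝ) (a v : Arg k) :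
    fderiv ℝ L a v = v.1 ⬝ᵥ pdX L a
      + (v.2.1 ⬝ᵥ pdx L a + v.2.2.1 ⬝ᵥ pdv L a + ∑ i, v.2.2.2.1 i ⬝ᵥ pdF L a i)
      + (v.2.2.2.2.1 ⬝ᵥ pdnu L a + v.2.2.2.2.2.1 ⬝ᵥ pdnud L a
        + ∑ α, v.2.2.2.2.2.2 α ⬝ᵥ pdN L a α) := by
  obtain ⟨v₁, v₂, v₃, v₄, v₅, v₆, v₇⟩ := v
  have hv : ((v₁, v₂, v₃, v₄, v₅, v₆, v₇) : Arg k) =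
      ∑ A, v₁ A • (Pi.single A 1, 0, 0, 0, 0, 0, 0) + ∑ i, v₂ i • (0, Pi.single i 1, 0, 0, 0, 0, 0)
      + ∑ i, v₃ i • (0, 0, Pi.single i 1, 0, 0, 0, 0)
      + ∑ i, ∑ A, v₄ i A • (0, 0, 0, Pi.single i (Pi.single A 1), 0, 0, 0)
      + ∑ α, v₅ α • (0, 0, 0, 0, Pi.single α 1, 0, 0)
      + ∑ α, v₆ α • (0, 0, 0, 0, 0, Pi.single α 1, 0)
      + ∑ α, ∑ A, v₇ α A • (0, 0, 0, 0, 0, 0, Pi.single α (Pi.single A 1)) := by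
    ext <;> simp [Prod.fst_sum, Prod.snd_sum, Finset.sum_apply, Pi.single_apply]
  conv_lhs => rw [hv]
  simp only [map_add, map_sum, map_smul, smul_eq_mul, dotProduct, pdX, pdx, pdv, pdF, pdnu, pdnud,
    pdN]
  ring

theorem sum_fderiv_mul_ite {n : ℕ} {g : (Fin n → ℝ) → ℝ} {X : Fin n → ℝ} (B : Fin n) :
    ∑ A, fderiv ℝ (fun Y => g Y * if B = A then 1 else 0) X (Pi.single A 1) =
      fderiv ℝ g X (Pi.single B 1) := by
  rw [Finset.sum_eq_single B (fun A _ hA => by simp [Ne.symm hA]) (by simp)]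
  simp

section Calculus

variable {𝕜 : Type*} [NontriviallyNormedField 𝕜] {E F G : Type*} [NormedAddCommGroup E]
  [NormedSpace 𝕜 E] [NormedAddCommGroup F] [NormedSpace 𝕜 F] [NormedAddCommGroup G]
  [NormedSpace 𝕜 G]

theorem ContDiffAt.hasFDerivAt_fderiv {g : E → F} {x : E} (hg : ContDiffAt 𝕜 2 g x) :
    HasFDerivAt (fderiv 𝕜 g) (fderiv 𝕜 (fderiv 𝕜 g) x) x :=
  ((hg.fderiv_right (m := 1) le_rfl).differentiableAt one_ne_zero).hasFDerivAt

theorem differentiable_fderiv_apply {g : E → F} (hg : ContDiff 𝕜 2 g) (c : E) :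
    Differentiable 𝕜 fun a => fderiv 𝕜 g a c :=
  ((hg.fderiv_right (m := 1) le_rfl).differentiable one_ne_zero).clm_apply (differentiable_const c)

variable {f : E → 𝕜 → G} {f' : E × 𝕜 →L[𝕜] G} {x : E} {t : 𝕜}

theorem HasFDerivAt.hasDerivAt_uncurry_snd (h : HasFDerivAt (uncurry f) f' (x, t)) :
    HasDerivAt (f x) (f' (0, 1)) t :=
  h.comp_hasDerivAt t ((hasDerivAt_const t x).prodMk (hasDerivAt_id t))

theorem HasFDerivAt.hasFDerivAt_uncurry_fst (h : HasFDerivAt (uncurry f) f' (x, t)) :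
    HasFDerivAt (fun y => f y t) (f'.comp (ContinuousLinearMap.inl 𝕜 E 𝕜)) x :=
  HasFDerivAt.comp x (f := fun y => (y, t)) h (hasFDerivAt_prodMk_left x t)

theorem DifferentiableAt.deriv_eq_fderiv_uncurry (h : DifferentiableAt 𝕜 (uncurry f) (x, t)) :
    deriv (f x) t = fderiv 𝕜 (uncurry f) (x, t) (0, 1) :=
  h.hasFDerivAt.hasDerivAt_uncurry_snd.deriv

end Calculus

def spatialGrad (m : ℕ) : ((V3 × ℝ) →L[ℝ] (Fin m → ℝ)) →L[ℝ] (Fin m → Fin 3 → ℝ) :=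
  ContinuousLinearMap.pi fun i => ContinuousLinearMap.pi fun A =>
    (ContinuousLinearMap.proj i).comp
      (ContinuousLinearMap.apply ℝ (Fin m → ℝ) ((Pi.single A 1 : V3), (0 : ℝ)))

section Field

variable {m : ℕ} {φ : V3 → ℝ → Fin m → ℝ} {X : V3} {t : ℝ}

theorem gradOp_eq_spatialGrad (hφ : DifferentiableAt ℝ (uncurry φ) (X, t)) :
    gradOp φ X t = spatialGrad m (fderiv ℝ (uncurry φ) (X, t)) := by
  ext i A
  simp [gradOp, spatialGrad, hφ.hasFDerivAt.hasFDerivAt_uncurry_fst.fderiv]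

theorem hasFDerivAt_uncurry_deriv (hφ : ContDiffAt ℝ 2 (uncurry φ) (X, t)) :
    HasFDerivAt (uncurry fun Y => deriv (φ Y))
      ((ContinuousLinearMap.apply ℝ _ (0, 1)).comp (fderiv ℝ (fderiv ℝ (uncurry φ)) (X, t)))
      (X, t) := by
  refine ((ContinuousLinearMap.apply ℝ _ (0, 1)).hasFDerivAt.comp _
    hφ.hasFDerivAt_fderiv).congr_of_eventuallyEq ?_
  filter_upwards [hφ.eventually (by simp)] with q hq
  exact (hq.differentiableAt two_ne_zero).deriv_eq_fderiv_uncurry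

theorem hasFDerivAt_uncurry_gradOp (hφ : ContDiffAt ℝ 2 (uncurry φ) (X, t)) :
    HasFDerivAt (uncurry (gradOp φ))
      ((spatialGrad m).comp (fderiv ℝ (fderiv ℝ (uncurry φ)) (X, t))) (X, t) := by
  refine ((spatialGrad m).hasFDerivAt.comp _ hφ.hasFDerivAt_fderiv).congr_of_eventuallyEq ?_
  filter_upwards [hφ.eventually (by simp)] with q hq
  exact gradOp_eq_spatialGrad (hq.differentiableAt two_ne_zero)

theorem differentiableAt_gradOp_time (hφ : ContDiffAt ℝ 2 (uncurry φ) (X, t)) :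
    DifferentiableAt ℝ (gradOp φ X) t :=
  (hasFDerivAt_uncurry_gradOp hφ).hasDerivAt_uncurry_snd.differentiableAt

theorem differentiableAt_gradOp_space (hφ : ContDiffAt ℝ 2 (uncurry φ) (X, t)) :
    DifferentiableAt ℝ (fun Y => gradOp φ Y t) X :=
  (hasFDerivAt_uncurry_gradOp hφ).hasFDerivAt_uncurry_fst.differentiableAt

theorem momentum_stress_flux_balance (hφ : ContDiffAt ℝ 2 (uncurry φ) (X, t))
    {p : ℝ → Fin m → ℝ} (hp : DifferentiableAt ℝ p t)
    {S : V3 → Fin m → Fin 3 → ℝ} (hS : DifferentiableAt ℝ S X) {f : Fin m → ℝ}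
    (hEL : deriv p t = f - divg S X) (B : Fin 3) :
    deriv (fun s => ∑ i, gradOp φ X s i B * p s i) t
      + ∑ A, fderiv ℝ (fun Y => ∑ i, gradOp φ Y t i B * S Y i A) X (Pi.single A 1)
    = fderiv ℝ (fun Y => φ Y t) X (Pi.single B 1) ⬝ᵥ f
      + fderiv ℝ (fun Y => deriv (φ Y) t) X (Pi.single B 1) ⬝ᵥ p t
      + ∑ i, fderiv ℝ (fun Y => gradOp φ Y t) X (Pi.single B 1) i ⬝ᵥ S X i := by
  have hgrad_t := (hasFDerivAt_uncurry_gradOp hφ).hasDerivAt_uncurry_snd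
  have hgrad_X := (hasFDerivAt_uncurry_gradOp hφ).hasFDerivAt_uncurry_fst
  have hvel_X := (hasFDerivAt_uncurry_deriv hφ).hasFDerivAt_uncurry_fst
  have hmom := HasDerivAt.fun_sum (u := Finset.univ) fun i _ =>
    (hasDerivAt_pi.1 (hasDerivAt_pi.1 hgrad_t i) B).fun_mul (hasDerivAt_pi.1 hp.hasDerivAt i)
  have hflux := fun A => HasFDerivAt.fun_sum (u := Finset.univ) fun i _ =>
    (hasFDerivAt_pi'.1 (hasFDerivAt_pi'.1 hgrad_X i) B).fun_mul
      (hasFDerivAt_pi'.1 (hasFDerivAt_pi'.1 hS.hasFDerivAt i) A)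
  have hdivg : ∀ i, divg S X i = ∑ A, fderiv ℝ S X (Pi.single A 1) i A := fun i =>
    Finset.sum_congr rfl fun A _ => by
      rw [(hasFDerivAt_pi'.1 (hasFDerivAt_pi'.1 hS.hasFDerivAt i) A).fderiv]; rfl
  rw [eq_sub_iff_add_eq] at hEL
  subst hEL
  simp only [hmom.deriv, (hflux _).fderiv, hvel_X.fderiv, hgrad_X.fderiv]
  set D := fderiv ℝ (fderiv ℝ (uncurry φ)) (X, t)
  have hD : ∀ v w, D v w = D w v := hφ.isSymmSndFDerivAt (by simp)
  simp only [spatialGrad, _root_.sum_apply, _root_.add_apply, _root_.smul_apply,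
    ContinuousLinearMap.comp_apply, ContinuousLinearMap.proj_apply, smul_eq_mul,
    ContinuousLinearMap.inl_apply, ContinuousLinearMap.coe_pi', ContinuousLinearMap.apply_apply,
    dotProduct, Pi.add_apply, hdivg, hD _ (Pi.single B 1, 0)]
  conv_lhs => rw [Finset.sum_comm]
  simp only [← Finset.sum_add_distrib]
  refine Finset.sum_congr rfl fun i _ => ?_
  simp only [gradOp, mul_add, Finset.mul_sum, Finset.sum_add_distrib, mul_comm (S X i _)]
  ring

end Field

section Jet

variable {k : ℕ} {x : V3 → ℝ → V3} {ν : V3 → ℝ → Fin k → ℝ} {X : V3} {t : ℝ}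

theorem differentiableAt_uncurry_jet (hx : ContDiffAt ℝ 2 (uncurry x) (X, t))
    (hν : ContDiffAt ℝ 2 (uncurry ν) (X, t)) :
    DifferentiableAt ℝ (uncurry (jet x ν)) (X, t) :=
  differentiableAt_fst.prodMk <| (hx.differentiableAt two_ne_zero).prodMk <|
    (hasFDerivAt_uncurry_deriv hx).differentiableAt.prodMk <|
    (hasFDerivAt_uncurry_gradOp hx).differentiableAt.prodMk <|
    (hν.differentiableAt two_ne_zero).prodMk <|
    (hasFDerivAt_uncurry_deriv hν).differentiableAt.prodMk
    (hasFDerivAt_uncurry_gradOp hν).differentiableAt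

theorem fderiv_jet_space_apply (hx : ContDiffAt ℝ 2 (uncurry x) (X, t))
    (hν : ContDiffAt ℝ 2 (uncurry ν) (X, t)) (v : V3) :
    fderiv ℝ (fun Y => jet x ν Y t) X v =
      (v, fderiv ℝ (fun Y => x Y t) X v, fderiv ℝ (fun Y => deriv (x Y) t) X v,
        fderiv ℝ (fun Y => gradPl x Y t) X v, fderiv ℝ (fun Y => ν Y t) X v,
        fderiv ℝ (fun Y => deriv (ν Y) t) X v, fderiv ℝ (fun Y => gradOp ν Y t) X v) := by
  have hx₀ := (hx.differentiableAt two_ne_zero).hasFDerivAt.hasFDerivAt_uncurry_fst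
  have hx₁ := (hasFDerivAt_uncurry_deriv hx).hasFDerivAt_uncurry_fst
  have hx₂ : HasFDerivAt (fun Y => gradPl x Y t) _ X :=
    (hasFDerivAt_uncurry_gradOp hx).hasFDerivAt_uncurry_fst
  have hν₀ := (hν.differentiableAt two_ne_zero).hasFDerivAt.hasFDerivAt_uncurry_fst
  have hν₁ := (hasFDerivAt_uncurry_deriv hν).hasFDerivAt_uncurry_fst
  have hν₂ := (hasFDerivAt_uncurry_gradOp hν).hasFDerivAt_uncurry_fst
  have hjet : HasFDerivAt (fun Y => jet x ν Y t) _ X := (hasFDerivAt_id X).prodMk <|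
    hx₀.prodMk <| hx₁.prodMk <| hx₂.prodMk <| hν₀.prodMk <| hν₁.prodMk hν₂
  rw [hjet.fderiv, hx₀.fderiv, hx₁.fderiv, hx₂.fderiv, hν₀.fderiv, hν₁.fderiv, hν₂.fderiv]
  rfl

end Jet

theorem configurational_balance_from_euler_lagrange_general
    (k : ℕ) (B₀ : Set V3) (hB₀ : IsOpen B₀) (T : ℝ)
    (L : Arg k → ℝ) (hL : ContDiff ℝ 2 L)
    (x : V3 → ℝ → V3) (ν : V3 → ℝ → (Fin k → ℝ))
    (hx : ContDiffOn ℝ 2 (fun p : V3 × ℝ => x p.1 p.2) (B₀ ×ˢ Set.Ioo 0 T))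
    (hν : ContDiffOn ℝ 2 (fun p : V3 × ℝ => ν p.1 p.2) (B₀ ×ˢ Set.Ioo 0 T))
    (hEL1 : ∀ X ∈ B₀, ∀ t ∈ Set.Ioo 0 T,
      deriv (fun s => pdv L (jet x ν X s)) t =
        pdx L (jet x ν X t) - divg (fun Y => pdF L (jet x ν Y t)) X)
    (hEL2 : ∀ X ∈ B₀, ∀ t ∈ Set.Ioo 0 T,
      deriv (fun s => pdnud L (jet x ν X s)) t =
        pdnu L (jet x ν X t) - divg (fun Y => pdN L (jet x ν Y t)) X) :
    ∀ X ∈ B₀, ∀ t ∈ Set.Ioo 0 T, ∀ B : Fin 3,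
      deriv (fun s =>
          (∑ i : Fin 3, gradPl x X s i B * pdv L (jet x ν X s) i) +
          (∑ α : Fin k, gradOp ν X s α B * pdnud L (jet x ν X s) α)) t =
        (∑ A : Fin 3, fderiv ℝ (fun Y =>
            L (jet x ν Y t) * (if B = A then (1:ℝ) else 0) -
            (∑ i : Fin 3, gradPl x Y t i B * pdF L (jet x ν Y t) i A) -
            (∑ α : Fin k, gradOp ν Y t α B * pdN L (jet x ν Y t) α A))
          X (Pi.single A 1)) -
        pdX L (jet x ν X t) B := by
  intro X hX t ht B
  have hU : B₀ ×ˢ Set.Ioo 0 T ∈ 𝓝 (X, t) := (hB₀.prod isOpen_Ioo).mem_nhds ⟨hX, ht⟩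
  have hx' : ContDiffAt ℝ 2 (uncurry x) (X, t) := hx.contDiffAt hU
  have hν' : ContDiffAt ℝ 2 (uncurry ν) (X, t) := hν.contDiffAt hU
  -- Several of the facts below are referenced only through `fun_prop`.
  have hjet := (differentiableAt_uncurry_jet hx' hν').hasFDerivAt
  have hjet_t := hjet.hasDerivAt_uncurry_snd.differentiableAt
  have hjet_X := hjet.hasFDerivAt_uncurry_fst.differentiableAt
  have hLd : Differentiable ℝ L := hL.differentiable two_ne_zero
  have hdL := differentiable_fderiv_apply hL
  have hpv : DifferentiableAt ℝ (fun s => pdv L (jet x ν X s)) t := by unfold pdv; fun_prop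
  have hpnud : DifferentiableAt ℝ (fun s => pdnud L (jet x ν X s)) t := by unfold pdnud; fun_prop
  have hpF : DifferentiableAt ℝ (fun Y => pdF L (jet x ν Y t)) X := by unfold pdF; fun_prop
  have hpN : DifferentiableAt ℝ (fun Y => pdN L (jet x ν Y t)) X := by unfold pdN; fun_prop
  have hbal_x := momentum_stress_flux_balance hx' hpv hpF (hEL1 X hX t ht) B
  have hbal_ν := momentum_stress_flux_balance hν' hpnud hpN (hEL2 X hX t ht) B
  have hgx_t : DifferentiableAt ℝ (gradPl x X) t := differentiableAt_gradOp_time hx'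
  have hgx_X : DifferentiableAt ℝ (fun Y => gradPl x Y t) X := differentiableAt_gradOp_space hx'
  have hgν_t := differentiableAt_gradOp_time hν'
  have hgν_X := differentiableAt_gradOp_space hν'
  simp (disch := fun_prop) only [deriv_fun_add, fderiv_fun_sub, _root_.sub_apply,
    Finset.sum_sub_distrib, sum_fderiv_mul_ite]
  rw [fderiv_fun_comp X (hLd _) hjet_X, ContinuousLinearMap.comp_apply,
    fderiv_jet_space_apply hx' hν', fderiv_apply_eq_sum_partials, single_one_dotProduct,
    show gradPl x = gradOp x from rfl]
  linarith

/-- **Corollary 4: configurational/Eshelby balance, `M = ℝᵏ`.**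
If the motion `(x̃, ν̃)` satisfies the Euler–Lagrange equations for a `C²` Lagrangian
density `𝓛(X, x, ẋ, F, ν, ν̇, ∇ν)` on `B₀ × (0,T)`, then the pointwise configurational
balance holds there:
`∂ₜ(Fᵀ∂_ẋ𝓛 + Nᵀ∂_ν̇𝓛) = Div(𝓛·I − Fᵀ∂_F𝓛 − Nᵀ∂_N𝓛) − ∂_X𝓛`,
where `𝓛·I − Fᵀ∂_F𝓛 − Nᵀ∂_N𝓛` is (up to kinetic and external-potential terms) the
modified Eshelby tensor `ℙ = ρ₀e·I − FᵀP − Nᵀ𝒮` for continua with substructure. -/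
theorem configurational_balance_from_euler_lagrange
    (k : ℕ) (B₀ : Set V3) (hB₀ : IsOpen B₀) (T : ℝ) (hT : 0 < T)
    (L : Arg k → ℝ) (hL : ContDiff ℝ 2 L)
    (x : V3 → ℝ → V3) (ν : V3 → ℝ → (Fin k → ℝ))
    (hx : ContDiffOn ℝ 2 (fun p : V3 × ℝ => x p.1 p.2) (B₀ ×ˢ Set.Ioo 0 T))
    (hν : ContDiffOn ℝ 2 (fun p : V3 × ℝ => ν p.1 p.2) (B₀ ×ˢ Set.Ioo 0 T))
    (hEL1 : ∀ X ∈ B₀, ∀ t ∈ Set.Ioo 0 T,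
      deriv (fun s => pdv L (jet x ν X s)) t =
        pdx L (jet x ν X t) - divg (fun Y => pdF L (jet x ν Y t)) X)
    (hEL2 : ∀ X ∈ B₀, ∀ t ∈ Set.Ioo 0 T,
      deriv (fun s => pdnud L (jet x ν X s)) t =
        pdnu L (jet x ν X t) - divg (fun Y => pdN L (jet x ν Y t)) X) :
    ∀ X ∈ B₀, ∀ t ∈ Set.Ioo 0 T, ∀ B : Fin 3,
      deriv (fun s =>
          (∑ i : Fin 3, gradPl x X s i B * pdv L (jet x ν X s) i) +
          (∑ α : Fin k, gradOp ν X s α B * pdnud L (jet x ν X s) α)) t =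
        (∑ A : Fin 3, fderiv ℝ (fun Y =>
            L (jet x ν Y t) * (if B = A then (1:ℝ) else 0) -
            (∑ i : Fin 3, gradPl x Y t i B * pdF L (jet x ν Y t) i A) -
            (∑ α : Fin k, gradOp ν Y t α B * pdN L (jet x ν Y t) α A))
          X (Pi.single A 1)) -
        pdX L (jet x ν X t) B :=
  configurational_balance_from_euler_lagrange_general k B₀ hB₀ T L hL x ν hx hν hEL1 hEL2
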